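/- Let S be the 4×4 matrix with rows (1,0,0,-1), (0,1,1,0), (0,1,-1,0), (1,0,0,1) and define F(A) = S⁻¹·A·S. A 4×4 real matrix A is a strictly stochastic strand symmetric (SSM) matrix if and only if F(A) has rows (λ, 1-λ, 0, 0), (1-μ, μ, 0, 0), (0, 0, α, α'), (0, 0, β', β) with 0 < λ < 1, 0 < μ < 1, |β| < λ, |β'| < 1-λ, |α| < μ, and |α'| < 1-μ. -/

import Mathlib

/-- The matrix `S` of the generalized Fourier transform for SSM matrices. -/
def Smat : Matrix (Fin 4) (Fin 4) ℝ :=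
  !![1, 0, 0, -1; 0, 1, 1, 0; 0, 1, -1, 0; 1, 0, 0, 1]

/-- The conjugation `F(A) = S⁻¹ A S`. -/
noncomputable def F (A : Matrix (Fin 4) (Fin 4) ℝ) : Matrix (Fin 4) (Fin 4) ℝ :=
  Smat⁻¹ * A * Smat

/-- A strand symmetric (SSM) matrix: rows `(a,b,c,d), (e,f,g,h), (h,g,f,e), (d,c,b,a)`
with row sums equal to `1`. -/
def IsSSM (A : Matrix (Fin 4) (Fin 4) ℝ) : Prop :=
  (∀ i, ∑ j, A i j = 1) ∧
    A 2 0 = A 1 3 ∧ A 2 1 = A 1 2 ∧ A 2 2 = A 1 1 ∧ A 2 3 = A 1 0 ∧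
    A 3 0 = A 0 3 ∧ A 3 1 = A 0 2 ∧ A 3 2 = A 0 1 ∧ A 3 3 = A 0 0

/-- A strictly stochastic matrix: all entries strictly positive and row sums equal to `1`. -/
def StrictlyStochastic (A : Matrix (Fin 4) (Fin 4) ℝ) : Prop :=
  (∀ i j, 0 < A i j) ∧ ∀ i, ∑ j, A i j = 1

open Matrix

/-!
Conjugation by `S` is invertible, and `S · diag([[λ, 1-λ], [1-μ, μ]], [[α, α'], [β', β]]) · S⁻¹`
is the SSM matrix whose entries are the halves of `λ ± β`, `1-λ ± β'`, `μ ± α` and `1-μ ± α'`.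
Every SSM matrix has this form, being determined by its first two rows. Positivity of these
entries is exactly the four absolute-value bounds, which in turn force `0 < λ, μ < 1`.
-/

theorem Matrix.inv_mul_mul_eq_iff {n R : Type*} [Fintype n] [DecidableEq n] [CommRing R]
    {S A B : Matrix n n R} (hS : IsUnit S.det) : S⁻¹ * A * S = B ↔ A = S * B * S⁻¹ := by
  constructor
  · rintro rfl
    simp [Matrix.mul_assoc, Matrix.mul_nonsing_inv _ hS, ← Matrix.mul_assoc S S⁻¹]
  · rintro rfl
    simp [Matrix.mul_assoc, Matrix.nonsing_inv_mul _ hS, ← Matrix.mul_assoc S⁻¹ S]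

theorem Smat_mul_half_transpose : Smat * ((2⁻¹ : ℝ) • Smatᵀ) = 1 := by
  ext i j
  fin_cases i <;> fin_cases j <;> simp [Smat, Matrix.mul_apply, Fin.sum_univ_four] <;> norm_num

theorem Smat_inv : Smat⁻¹ = (2⁻¹ : ℝ) • Smatᵀ :=
  Matrix.inv_eq_right_inv Smat_mul_half_transpose

theorem isUnit_det_Smat : IsUnit Smat.det :=
  Matrix.isUnit_det_of_right_inverse Smat_mul_half_transpose

noncomputable def ssmMatrix (lam mu al al' be be' : ℝ) : Matrix (Fin 4) (Fin 4) ℝ :=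
  !![(lam + be) / 2, (1 - lam - be') / 2, (1 - lam + be') / 2, (lam - be) / 2;
     (1 - mu - al') / 2, (mu + al) / 2, (mu - al) / 2, (1 - mu + al') / 2;
     (1 - mu + al') / 2, (mu - al) / 2, (mu + al) / 2, (1 - mu - al') / 2;
     (lam - be) / 2, (1 - lam + be') / 2, (1 - lam - be') / 2, (lam + be) / 2]

def fourierBlock (lam mu al al' be be' : ℝ) : Matrix (Fin 4) (Fin 4) ℝ :=
  !![lam, 1 - lam, 0, 0; 1 - mu, mu, 0, 0; 0, 0, al, al'; 0, 0, be', be]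

theorem Smat_mul_fourierBlock_mul_inv (lam mu al al' be be' : ℝ) :
    Smat * fourierBlock lam mu al al' be be' * Smat⁻¹ = ssmMatrix lam mu al al' be be' := by
  rw [Smat_inv]
  ext i j
  fin_cases i <;> fin_cases j <;>
    simp [Smat, fourierBlock, ssmMatrix, Matrix.mul_apply, Fin.sum_univ_four] <;> ring

theorem F_eq_fourierBlock_iff {A : Matrix (Fin 4) (Fin 4) ℝ} {lam mu al al' be be' : ℝ} :
    F A = fourierBlock lam mu al al' be be' ↔ A = ssmMatrix lam mu al al' be be' := by
  rw [F, Matrix.inv_mul_mul_eq_iff isUnit_det_Smat, Smat_mul_fourierBlock_mul_inv]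

theorem ssmMatrix_rowSum (lam mu al al' be be' : ℝ) (i : Fin 4) :
    ∑ j, ssmMatrix lam mu al al' be be' i j = 1 := by
  fin_cases i <;> simp [ssmMatrix, Fin.sum_univ_four] <;> ring

theorem isSSM_ssmMatrix (lam mu al al' be be' : ℝ) : IsSSM (ssmMatrix lam mu al al' be be') :=
  ⟨ssmMatrix_rowSum lam mu al al' be be', by simp [ssmMatrix]⟩

theorem IsSSM.eq_ssmMatrix {A : Matrix (Fin 4) (Fin 4) ℝ} (hA : IsSSM A) :
    A = ssmMatrix (A 0 0 + A 0 3) (A 1 1 + A 1 2) (A 1 1 - A 1 2) (A 1 3 - A 1 0)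
      (A 0 0 - A 0 3) (A 0 2 - A 0 1) := by
  obtain ⟨hrow, e20, e21, e22, e23, e30, e31, e32, e33⟩ := hA
  have h0 := hrow 0
  have h1 := hrow 1
  rw [Fin.sum_univ_four] at h0 h1
  ext i j
  fin_cases i <;> fin_cases j <;> simp [ssmMatrix, *] <;> linarith

theorem ssmMatrix_pos_iff {lam mu al al' be be' : ℝ} :
    (∀ i j, 0 < ssmMatrix lam mu al al' be be' i j) ↔
      |be| < lam ∧ |be'| < 1 - lam ∧ |al| < mu ∧ |al'| < 1 - mu := by
  simp only [ssmMatrix, of_apply, cons_val', cons_val_fin_one, Fin.forall_fin_succ, Fin.isValue,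
    cons_val_zero, cons_val_succ, forall_const, Nat.ofNat_pos, div_pos_iff_of_pos_right, sub_pos,
    abs_lt, neg_sub]
  grind

theorem stmt_12 (A : Matrix (Fin 4) (Fin 4) ℝ) :
    (StrictlyStochastic A ∧ IsSSM A) ↔
      ∃ lam mu al al' be be' : ℝ,
        F A = !![lam, 1 - lam, 0, 0; 1 - mu, mu, 0, 0; 0, 0, al, al'; 0, 0, be', be] ∧
        0 < lam ∧ lam < 1 ∧ 0 < mu ∧ mu < 1 ∧
        |be| < lam ∧ |be'| < 1 - lam ∧ |al| < mu ∧ |al'| < 1 - mu := by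
  constructor
  · rintro ⟨⟨hpos, -⟩, hSSM⟩
    have hA := hSSM.eq_ssmMatrix
    rw [hA] at hpos
    obtain ⟨hbe, hbe', hal, hal'⟩ := ssmMatrix_pos_iff.1 hpos
    exact ⟨_, _, _, _, _, _, F_eq_fourierBlock_iff.2 hA, (abs_nonneg _).trans_lt hbe,
      sub_pos.1 ((abs_nonneg _).trans_lt hbe'), (abs_nonneg _).trans_lt hal,
      sub_pos.1 ((abs_nonneg _).trans_lt hal'), hbe, hbe', hal, hal'⟩
  · rintro ⟨lam, mu, al, al', be, be', hF, -, -, -, -, hbounds⟩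
    obtain rfl := F_eq_fourierBlock_iff.1 hF
    exact ⟨⟨ssmMatrix_pos_iff.2 hbounds, ssmMatrix_rowSum _ _ _ _ _ _⟩, isSSM_ssmMatrix ..⟩
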